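/- If π_d : O → Test (O × O) is an α-decomposition, then for every syntactic type τ, every value formula φ : Form val τ, every computation M : Cpt (U τ) (i.e. M : Tree I (Cpt τ)) and every o : O, the sequenced computation μ M satisfies obs_α o φ if and only if M satisfies the formula (π_d o)_α[φ]. -/

import Mathlib

set_option autoImplicit false

universe u v w

/-! ### Tests -/

inductive Test (A : Type u) : Type u
  | atom (a : A)
  | tru
  | fls
  | and (t₁ t₂ : Test A)
  | or (t₁ t₂ : Test A)
  | all (ts : ℕ → Test A)
  | ex (ts : ℕ → Test A)

/-- Interpretation of tests as types. -/
def liftTest {A : Type u} (P : A → Type w) : Test A → Type w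
  | .atom a => P a
  | .tru => PUnit
  | .fls => PEmpty
  | .and t₁ t₂ => liftTest P t₁ × liftTest P t₂
  | .or t₁ t₂ => liftTest P t₁ ⊕ liftTest P t₂
  | .all ts => (n : ℕ) → liftTest P (ts n)
  | .ex ts => (n : ℕ) × liftTest P (ts n)

def mapTest {A : Type u} {B : Type v} (f : A → B) : Test A → Test B
  | .atom a => .atom (f a)
  | .tru => .tru
  | .fls => .fls
  | .and t₁ t₂ => .and (mapTest f t₁) (mapTest f t₂)
  | .or t₁ t₂ => .or (mapTest f t₁) (mapTest f t₂)
  | .all ts => .all (fun n => mapTest f (ts n))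
  | .ex ts => .ex (fun n => mapTest f (ts n))

/-- The dual of a test. -/
def dualTest {A : Type u} : Test A → Test A
  | .atom a => .atom a
  | .tru => .fls
  | .fls => .tru
  | .and t₁ t₂ => .or (dualTest t₁) (dualTest t₂)
  | .or t₁ t₂ => .and (dualTest t₁) (dualTest t₂)
  | .all ts => .ex (fun n => dualTest (ts n))
  | .ex ts => .all (fun n => dualTest (ts n))

/-! ### Coinductive trees, as an M-type -/

def CTreeP (K : Type) (I : K → Type) (A : Type v) : PFunctor.{v} :=
  ⟨A ⊕ ULift.{v} K, Sum.elim (fun _ => PEmpty.{v+1}) (fun k => ULift.{v} (I k.down))⟩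

/-- Coinductive trees with `A`-labelled leaves and `K`-labelled nodes of arity `I k`. -/
def CTree (K : Type) (I : K → Type) (A : Type v) : Type v := (CTreeP K I A).M

namespace CTree

variable {K : Type} {I : K → Type} {A : Type v}

def leaf (a : A) : CTree K I A :=
  PFunctor.M.mk ⟨Sum.inl a, fun e => e.elim⟩

def node (k : K) (ts : I k → CTree K I A) : CTree K I A :=
  PFunctor.M.mk ⟨Sum.inr ⟨k⟩, fun i => ts i.down⟩

/-- Monad multiplication on trees: `mu (leaf t) = t`, `mu (node k ts) = node k (mu ∘ ts)`. -/
def mu (d : CTree K I (CTree K I A)) : CTree K I A :=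
  PFunctor.M.corec
    (fun (s : CTree K I (CTree K I A) ⊕ CTree K I A) =>
      match s with
      | Sum.inl d' =>
          match PFunctor.M.dest d' with
          | ⟨Sum.inl t, _⟩ =>
              (match PFunctor.M.dest t with
              | ⟨Sum.inl a, _⟩ => ⟨Sum.inl a, fun e => e.elim⟩
              | ⟨Sum.inr k, ts⟩ => ⟨Sum.inr k, fun i => Sum.inr (ts i)⟩)
          | ⟨Sum.inr k, ds⟩ => ⟨Sum.inr k, fun i => Sum.inl (ds i)⟩
      | Sum.inr t =>
          match PFunctor.M.dest t with
          | ⟨Sum.inl a, _⟩ => ⟨Sum.inl a, fun e => e.elim⟩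
          | ⟨Sum.inr k, ts⟩ => ⟨Sum.inr k, fun i => Sum.inr (ts i)⟩)
    (Sum.inl d)

end CTree
/-! ### The inductive predicate lifting α -/

section PredLift

variable {K : Type} {I : K → Type} {O : Type}

mutual
  /-- The inductive algebra `α`, parametrized directly by the leaf predicate `P`:
      `Alpha πl πn P o t` corresponds to `α o (mapTree P t)` in the paper. -/
  inductive Alpha {K : Type} {I : K → Type} {O : Type}
      (πl : O → Bool) (πn : (k : K) → O → Test (I k × O))
      {A : Type v} (P : A → Type w) : O → CTree K I A → Type (max v w)
    | leaf {o : O} {a : A} (b : πl o = true) (p : P a) :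
        Alpha πl πn P o (CTree.leaf a)
    | node {o : O} {k : K} {Ps : I k → CTree K I A}
        (ps : AlphaT πl πn P (πn k o) Ps) :
        Alpha πl πn P o (CTree.node k Ps)

  /-- Inductive presentation of `liftTest (fun (x, o') => Alpha πl πn P o' (Ps x)) s`. -/
  inductive AlphaT {K : Type} {I : K → Type} {O : Type}
      (πl : O → Bool) (πn : (k : K) → O → Test (I k × O))
      {A : Type v} (P : A → Type w) :
      {k : K} → Test (I k × O) → (I k → CTree K I A) → Type (max v w)
    | atom {k : K} {x : I k} {o : O} {Ps : I k → CTree K I A}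
        (p : Alpha πl πn P o (Ps x)) : AlphaT πl πn P (.atom (x, o)) Ps
    | tru {k : K} {Ps : I k → CTree K I A} : AlphaT πl πn P .tru Ps
    | and {k : K} {t₁ t₂ : Test (I k × O)} {Ps : I k → CTree K I A}
        (p₁ : AlphaT πl πn P t₁ Ps) (p₂ : AlphaT πl πn P t₂ Ps) :
        AlphaT πl πn P (.and t₁ t₂) Ps
    | orl {k : K} {t₁ t₂ : Test (I k × O)} {Ps : I k → CTree K I A}
        (p : AlphaT πl πn P t₁ Ps) : AlphaT πl πn P (.or t₁ t₂) Ps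
    | orr {k : K} {t₁ t₂ : Test (I k × O)} {Ps : I k → CTree K I A}
        (p : AlphaT πl πn P t₂ Ps) : AlphaT πl πn P (.or t₁ t₂) Ps
    | all {k : K} {ts : ℕ → Test (I k × O)} {Ps : I k → CTree K I A}
        (ps : (n : ℕ) → AlphaT πl πn P (ts n) Ps) : AlphaT πl πn P (.all ts) Ps
    | ex {k : K} {ts : ℕ → Test (I k × O)} {Ps : I k → CTree K I A}
        (n : ℕ) (p : AlphaT πl πn P (ts n) Ps) : AlphaT πl πn P (.ex ts) Ps
end

/-- The inductive `O`-indexed predicate lifting. -/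
def liftTree (πl : O → Bool) (πn : (k : K) → O → Test (I k × O))
    (o : O) {A : Type v} (P : A → Type w) (t : CTree K I A) : Type (max v w) :=
  Alpha πl πn P o t

/-! ### The coinductive predicate lifting β, encoded as an M-type of raw proof
trees carrying a (coinductively defined) well-formedness invariant. -/

/-- Selections through a test: the container shapes of `liftTest`. -/
inductive Sel {X : Type} : Test X → Type
  | atom (x : X) : Sel (.atom x)
  | tru : Sel .tru
  | and {t₁ t₂ : Test X} (c₁ : Sel t₁) (c₂ : Sel t₂) : Sel (.and t₁ t₂)
  | orl {t₁ t₂ : Test X} (c : Sel t₁) : Sel (.or t₁ t₂)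
  | orr {t₁ t₂ : Test X} (c : Sel t₂) : Sel (.or t₁ t₂)
  | all {ts : ℕ → Test X} (cs : (n : ℕ) → Sel (ts n)) : Sel (.all ts)
  | ex {ts : ℕ → Test X} (n : ℕ) (c : Sel (ts n)) : Sel (.ex ts)

/-- The atoms reached by a selection, with their labels:
`liftTest Q s ≃ Σ c : Sel s, ∀ x, Sel.At c x → Q x`. -/
inductive Sel.At {X : Type} : {s : Test X} → Sel s → X → Type
  | atom (x : X) : Sel.At (.atom x) x
  | andl {t₁ t₂ : Test X} {c₁ : Sel t₁} {c₂ : Sel t₂} {x : X}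
      (h : Sel.At c₁ x) : Sel.At (.and c₁ c₂) x
  | andr {t₁ t₂ : Test X} {c₁ : Sel t₁} {c₂ : Sel t₂} {x : X}
      (h : Sel.At c₂ x) : Sel.At (.and c₁ c₂) x
  | orl {t₁ t₂ : Test X} {c : Sel t₁} {x : X}
      (h : Sel.At c x) : Sel.At (.orl (t₂ := t₂) c) x
  | orr {t₁ t₂ : Test X} {c : Sel t₂} {x : X}
      (h : Sel.At c x) : Sel.At (.orr (t₁ := t₁) c) x
  | all {ts : ℕ → Test X} {cs : (n : ℕ) → Sel (ts n)} (n : ℕ) {x : X}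
      (h : Sel.At (cs n) x) : Sel.At (.all cs) x
  | ex {ts : ℕ → Test X} {n : ℕ} {c : Sel (ts n)} {x : X}
      (h : Sel.At c x) : Sel.At (.ex n c) x

variable (πl : O → Bool) (πn : (k : K) → O → Test (I k × O))

/-- Shapes of raw proof trees for the coinductive lifting specified by `(πl, πn)`:
either leaf evidence (a proof of the leaf predicate, or evidence that the
observation is not correct for termination), or a selection through the test
at a node. -/
def BetaShape {A : Type v} (P : A → Type w) : Type (max v w) :=
  (Σ' (o : O) (a : A), PSum (P a) (πl o = false)) ⊕ (Σ' (k : K) (o : O), Sel (πn k o))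

end PredLift
section Beta

variable {K : Type} {I : K → Type} {O : Type}
variable (πl : O → Bool) (πn : (k : K) → O → Test (I k × O))

/-- The polynomial functor of raw proof trees for the coinductive lifting. -/
def BetaPF {A : Type v} (P : A → Type w) : PFunctor.{max v w} :=
  ⟨BetaShape πl πn P,
   Sum.elim (fun _ => PEmpty.{(max v w)+1})
     (fun s => ULift.{max v w} ((x : I s.1 × O) × Sel.At s.2.2 x))⟩

/-- Raw (coinductive) proof trees for the coinductive lifting. -/
def BetaPf {A : Type v} (P : A → Type w) : Type (max v w) := (BetaPF πl πn P).M

/-- One step of well-formedness of a raw proof tree with respect to an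
observation and a tree. -/
def BetaWFStep {A : Type v} (P : A → Type w)
    (R : BetaPf πl πn P → O → CTree K I A → Prop)
    (pf : BetaPf πl πn P) (o : O) (t : CTree K I A) : Prop :=
  match PFunctor.M.dest pf, PFunctor.M.dest t with
  | ⟨Sum.inl ⟨o', a', _⟩, _⟩, ⟨Sum.inl a, _⟩ => o' = o ∧ a' = a
  | ⟨Sum.inr ⟨k', o', c⟩, ch⟩, ⟨Sum.inr k, ts⟩ =>
      o' = o ∧ ∃ h : k' = k.down,
        ∀ (x : I k' × O) (hx : Sel.At c x),
          R (ch ⟨⟨x, hx⟩⟩) x.2 (ts ⟨h ▸ x.1⟩)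
  | _, _ => False

/-- Well-formedness (the coinductive component of `β`), as a greatest fixed
point: an invariant closed under one-step unfolding. -/
def BetaWF {A : Type v} (P : A → Type w)
    (pf : BetaPf πl πn P) (o : O) (t : CTree K I A) : Prop :=
  ∃ R : BetaPf πl πn P → O → CTree K I A → Prop,
    (∀ pf o t, R pf o t → BetaWFStep πl πn P R pf o t) ∧ R pf o t

/-- The coinductive algebra `β` specified by `(πl, πn)`, parametrized directly
by the leaf predicate `P`: `Beta πl πn P o t` corresponds to
`β o (mapTree P t)` in the paper. -/
def Beta {A : Type v} (P : A → Type w) (o : O) (t : CTree K I A) : Type (max v w) :=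
  Σ' pf : BetaPf πl πn P, BetaWF πl πn P pf o t

/-- The coinductive `O`-indexed predicate lifting, forming a complementing
pair with `liftTree`: it is specified by `πl` and the dual of `πn`. -/
def coliftTree (o : O) {A : Type v} (P : A → Type w) (t : CTree K I A) : Type (max v w) :=
  Beta πl (fun k o' => dualTest (πn k o')) P o t

end Beta
section Gamma

variable {K : Type} {I : K → Type} {O : Type}

/-- `R`-correctness of a predicate. -/
def RCorrect {A : Type v} (R : A → A → Type u) (f : A → Type) : Type (max v u) :=
  ∀ a b, f a → R a b → f b

variable (πl : O → Bool) (πn : (k : K) → O → Test (I k × O))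

/-- The relation lifting `Γ`. -/
def Gamma {A : Type v} (R : A → A → Type u) (t₀ t₁ : CTree K I A) : Type (max v u 1) :=
  ∀ (f : A → Type), RCorrect R f → ∀ o : O,
    (liftTree πl πn o f t₀ → liftTree πl πn o f t₁) ×
    (coliftTree πl πn o f t₀ → coliftTree πl πn o f t₁)

end Gamma

section Lang

variable (K : Type) (I : K → Type) (O : Type)

inductive Ty : Type
  | nat
  | arrow (σ ρ : Ty)
  | prod (σ ρ : Ty)
  | u (σ : Ty)

def Val : Ty → Type
  | .nat => ℕ
  | .arrow σ ρ => Val σ → CTree K I (Val ρ)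
  | .prod σ ρ => Val σ × Val ρ
  | .u σ => CTree K I (Val σ)

def Cpt (σ : Ty) : Type := CTree K I (Val K I σ)

inductive Srt : Type
  | val
  | cpt

def Tm : Srt → Ty → Type
  | .val, σ => Val K I σ
  | .cpt, σ => Cpt K I σ

mutual
  /-- Behavioural formulae. -/
  inductive Form : Srt → Ty → Type
    | eq (n : ℕ) : Form .val .nat
    | neq (n : ℕ) : Form .val .nat
    | mapsto {σ ρ : Ty} (V : Val K I σ) (φ : Form .cpt ρ) : Form .val (.arrow σ ρ)
    | fst {σ ρ : Ty} (φ : Form .val σ) : Form .val (.prod σ ρ)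
    | snd {σ ρ : Ty} (φ : Form .val ρ) : Form .val (.prod σ ρ)
    | thunk {σ : Ty} (φ : Form .cpt σ) : Form .val (.u σ)
    | test {b : Srt} {σ : Ty} (φs : FTest b σ) : Form b σ
    | obsA {σ : Ty} (o : O) (φ : Form .val σ) : Form .cpt σ
    | obsB {σ : Ty} (o : O) (φ : Form .val σ) : Form .cpt σ

  /-- Tests of formulae: the grammar `Test` instantiated at `Form b σ`
  (inlined, as Lean does not accept the nested occurrence). -/
  inductive FTest : Srt → Ty → Type
    | atom {b : Srt} {σ : Ty} (φ : Form b σ) : FTest b σ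
    | tru {b : Srt} {σ : Ty} : FTest b σ
    | fls {b : Srt} {σ : Ty} : FTest b σ
    | and {b : Srt} {σ : Ty} (t₁ t₂ : FTest b σ) : FTest b σ
    | or {b : Srt} {σ : Ty} (t₁ t₂ : FTest b σ) : FTest b σ
    | all {b : Srt} {σ : Ty} (ts : ℕ → FTest b σ) : FTest b σ
    | ex {b : Srt} {σ : Ty} (ts : ℕ → FTest b σ) : FTest b σ
end

end Lang

section Neg

variable {K : Type} {I : K → Type} {O : Type}

/-- `FTest b σ` realizes `Test (Form b σ)`. -/
def toFTest {b : Srt} {σ : Ty} : Test (Form K I O b σ) → FTest K I O b σ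
  | .atom φ => .atom φ
  | .tru => .tru
  | .fls => .fls
  | .and t₁ t₂ => .and (toFTest t₁) (toFTest t₂)
  | .or t₁ t₂ => .or (toFTest t₁) (toFTest t₂)
  | .all ts => .all (fun n => toFTest (ts n))
  | .ex ts => .ex (fun n => toFTest (ts n))

/-- The formula `test φs` for a test of formulae `φs : Test (Form b σ)`. -/
def Form.mkTest {b : Srt} {σ : Ty} (φs : Test (Form K I O b σ)) : Form K I O b σ :=
  .test (toFTest φs)

mutual
  /-- Negation of formulae. -/
  def negFma : {b : Srt} → {σ : Ty} → Form K I O b σ → Form K I O b σ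
    | _, _, .eq n => .neq n
    | _, _, .neq n => .eq n
    | _, _, .mapsto V φ => .mapsto V (negFma φ)
    | _, _, .fst φ => .fst (negFma φ)
    | _, _, .snd φ => .snd (negFma φ)
    | _, _, .thunk φ => .thunk (negFma φ)
    | _, _, .test φs => .test (negFTest φs)
    | _, _, .obsA o φ => .obsB o (negFma φ)
    | _, _, .obsB o φ => .obsA o (negFma φ)

  /-- The action of `mapTest negFma` on tests of formulae. -/
  def negFTest : {b : Srt} → {σ : Ty} → FTest K I O b σ → FTest K I O b σ
    | _, _, .atom φ => .atom (negFma φ)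
    | _, _, .tru => .tru
    | _, _, .fls => .fls
    | _, _, .and t₁ t₂ => .and (negFTest t₁) (negFTest t₂)
    | _, _, .or t₁ t₂ => .or (negFTest t₁) (negFTest t₂)
    | _, _, .all ts => .all (fun n => negFTest (ts n))
    | _, _, .ex ts => .ex (fun n => negFTest (ts n))
end

end Neg
section Sat

variable {K : Type} {I : K → Type} {O : Type}
variable (πl : O → Bool) (πn : (k : K) → O → Test (I k × O))

mutual
  /-- Satisfaction of formulae by terms: `Sat πl πn φ P` is `P ⊨ φ`. -/
  def Sat : {b : Srt} → {σ : Ty} → Form K I O b σ → Tm K I b σ → Type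
    | _, _, .eq n, m => PLift (m = n)
    | _, _, .neq n, m => PLift (m ≠ n)
    | _, _, .mapsto V φ, W => Sat φ (W V)
    | _, _, .fst φ, p => Sat φ p.1
    | _, _, .snd φ, p => Sat φ p.2
    | _, _, .thunk φ, V => Sat (b := .cpt) φ V
    | _, _, .test φs, P => SatTest φs P
    | _, _, .obsA o φ, M => liftTree πl πn o (fun V => Sat φ V) M
    | _, _, .obsB o φ, M => coliftTree πl πn o (fun V => Sat φ V) M

  /-- Satisfaction of tests of formulae: realizes `liftTest (fun φ => Sat πl πn φ P) φs`. -/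
  def SatTest : {b : Srt} → {σ : Ty} → FTest K I O b σ → Tm K I b σ → Type
    | _, _, .atom φ, P => Sat φ P
    | _, _, .tru, _ => PUnit
    | _, _, .fls, _ => PEmpty
    | _, _, .and t₁ t₂, P => SatTest t₁ P × SatTest t₂ P
    | _, _, .or t₁ t₂, P => SatTest t₁ P ⊕ SatTest t₂ P
    | _, _, .all ts, P => (n : ℕ) → SatTest (ts n) P
    | _, _, .ex ts, P => (n : ℕ) × SatTest (ts n) P
end

end Sat
section Decomp

variable {K : Type} {I : K → Type} {O : Type}
variable (πl : O → Bool) (πn : (k : K) → O → Test (I k × O))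

/-- The algebra `α` on trees of types. -/
def algA (o : O) (t : CTree K I Type) : Type 1 :=
  Alpha πl πn (fun X => X) o t

/-- The algebra `β` on trees of types (as part of the complementing pair, it
is specified by `πl` and the dual of `πn`). -/
def algB (o : O) (t : CTree K I Type) : Type 1 :=
  coliftTree πl πn o (fun X => X) t

/-- The extensional order `⊑` on double trees. -/
def DTLe (d₀ d₁ : CTree K I (CTree K I Type)) : Type 1 :=
  ∀ o₀ o₁ : O,
    (liftTree πl πn o₀ (algA πl πn o₁) d₀ → liftTree πl πn o₀ (algA πl πn o₁) d₁) ×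
    (coliftTree πl πn o₀ (algB πl πn o₁) d₀ → coliftTree πl πn o₀ (algB πl πn o₁) d₁)

/-- The extensional order `⊑` on single trees. -/
def STLe (t₀ t₁ : CTree K I Type) : Type 1 :=
  ∀ o : O, (algA πl πn o t₀ → algA πl πn o t₁) × (algB πl πn o t₀ → algB πl πn o t₁)

/-- Strong decomposability of `(O, πl, πn)`. -/
def StronglyDecomposable : Type 1 :=
  ∀ d₀ d₁ : CTree K I (CTree K I Type),
    DTLe πl πn d₀ d₁ → STLe πl πn (CTree.mu d₀) (CTree.mu d₁)

/-- `πd` is an `α`-decomposition. -/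
def IsAlphaDecomposition (πd : O → Test (O × O)) : Type 1 :=
  ∀ (d : CTree K I (CTree K I Type)) (o : O),
    (algA πl πn o (CTree.mu d) →
      liftTest (fun p => liftTree πl πn p.1 (algA πl πn p.2) d) (πd o)) ×
    (liftTest (fun p => liftTree πl πn p.1 (algA πl πn p.2) d) (πd o) →
      algA πl πn o (CTree.mu d))

/-- `πd` is a `β`-decomposition. -/
def IsBetaDecomposition (πd : O → Test (O × O)) : Type 1 :=
  ∀ (d : CTree K I (CTree K I Type)) (o : O),
    (algB πl πn o (CTree.mu d) →
      liftTest (fun p => coliftTree πl πn p.1 (algB πl πn p.2) d) (πd o)) ×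
    (liftTest (fun p => coliftTree πl πn p.1 (algB πl πn p.2) d) (πd o) →
      algB πl πn o (CTree.mu d))

/-- The formula `(πd o)_α[φ]`. -/
def decompFormA (πd : O → Test (O × O)) (o : O) {τ : Ty} (φ : Form K I O .val τ) :
    Form K I O .cpt (.u τ) :=
  Form.mkTest (mapTest (fun p => .obsA p.1 (.thunk (.obsA p.2 φ))) (πd o))

/-- The formula `(πd o)_β[φ]`. -/
def decompFormB (πd : O → Test (O × O)) (o : O) {τ : Ty} (φ : Form K I O .val τ) :
    Form K I O .cpt (.u τ) :=
  Form.mkTest (mapTest (fun p => .obsB p.1 (.thunk (.obsB p.2 φ))) (πd o))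

end Decomp

section Sim

variable {K : Type} {I : K → Type} {O : Type}
variable (πl : O → Bool) (πn : (k : K) → O → Test (I k × O))

/-- Well-typed relations on terms. -/
def WtRel (K : Type) (I : K → Type) : Type 1 :=
  (b : Srt) → (τ : Ty) → Tm K I b τ → Tm K I b τ → Type

/-- Applicative `Γ`-simulations. -/
structure IsSimulation (R : WtRel K I) : Type 1 where
  natCond : ∀ n m : Tm K I .val .nat, R .val .nat n m → n = m
  arrowCond : ∀ {σ τ : Ty} (V W : Tm K I .val (.arrow σ τ)),
    R .val (.arrow σ τ) V W → ∀ U : Val K I σ, R .cpt τ (V U) (W U)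
  prodCond : ∀ {σ τ : Ty} (V W : Tm K I .val (.prod σ τ)),
    R .val (.prod σ τ) V W → R .val σ V.1 W.1 × R .val τ V.2 W.2
  thunkCond : ∀ {σ : Ty} (V W : Tm K I .val (.u σ)),
    R .val (.u σ) V W → R .cpt σ V W
  cptCond : ∀ {τ : Ty} (M N : Tm K I .cpt τ),
    R .cpt τ M N → Gamma πl πn (R .val τ) M N

/-- Applicative `Γ`-similarity. -/
def AppSimilar {b : Srt} {τ : Ty} (P Q : Tm K I b τ) : Type 1 :=
  Σ R : WtRel K I, IsSimulation πl πn R × R b τ P Q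

/-- Applicative `Γ`-bisimilarity. -/
def Bisimilar {b : Srt} {τ : Ty} (P Q : Tm K I b τ) : Type 1 :=
  Σ R : WtRel K I,
    IsSimulation πl πn R × (∀ b τ P Q, R b τ P Q → R b τ Q P) × R b τ P Q

end Sim

/-- Reflexive-transitive closure of a `Type`-valued relation. -/
inductive RTC {A : Type u} (R : A → A → Type u) : A → A → Type u
  | refl (a : A) : RTC R a a
  | tail {a b c : A} (h : RTC R a b) (h' : R b c) : RTC R a c

/-! Write `Sφ V` for `V ⊨ φ`, so that `t ⊨ obs_α o φ` is `α o (mapTree Sφ t)`. Up to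
inhabitation the inductive lifting only sees the leaf predicate, so relabelling the leaves
along `mapTree` preserves it both ways. By naturality of `μ`, `mapTree Sφ (μ M) = μ d` for the
double tree `d = mapTree (mapTree Sφ) M`; the α-decomposition property turns `α o (μ d)` into
a test over `liftTree o₀ (α o₁) d`, and relabelling once more identifies this test with
`M ⊨ (π_d o)_α[φ]`. -/

open PFunctor

namespace CTree

variable {K : Type} {I : K → Type} {A : Type u} {B : Type v}

@[simp] theorem dest_leaf (a : A) :
    M.dest (leaf (K := K) (I := I) a) = ⟨Sum.inl a, fun e => e.elim⟩ := rfl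

@[simp] theorem dest_node (k : K) (ts : I k → CTree K I A) :
    M.dest (node k ts) = ⟨Sum.inr ⟨k⟩, fun i => ts i.down⟩ := rfl

theorem dest_injective : Function.Injective (M.dest : CTree K I A → _) := fun x y h => by
  rw [← M.mk_dest x, ← M.mk_dest y, h]

theorem leaf_or_node (t : CTree K I A) : (∃ a, t = leaf a) ∨ ∃ k ts, t = node k ts := by
  induction t using M.casesOn' with
  | f a ts =>
    rcases a with a | k
    · refine Or.inl ⟨a, ?_⟩
      rw [show ts = fun e => PEmpty.elim e from funext fun e => PEmpty.elim e]
      rfl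
    · exact Or.inr ⟨k.down, fun i => ts ⟨i⟩, rfl⟩

theorem leaf_injective : Function.Injective (leaf (K := K) (I := I) (A := A)) := fun _ _ h =>
  Sum.inl.inj (congrArg (fun t => (M.dest t).1) h)

theorem leaf_ne_node {a : A} {k : K} {ts : I k → CTree K I A} : leaf a ≠ node k ts := fun h =>
  Sum.inl_ne_inr (congrArg (fun t => (M.dest t).1) h)

theorem node_inj {k k' : K} {ts : I k → CTree K I A} {ts' : I k' → CTree K I A}
    (h : node k ts = node k' ts') : ∃ e : k = k', ∀ i, ts i = ts' (e ▸ i) := by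
  obtain ⟨hk, hts⟩ := Sigma.mk.inj_iff.mp (congrArg M.dest h)
  obtain rfl : k = k' := congrArg ULift.down (Sum.inr.inj hk)
  exact ⟨rfl, fun i => congrFun (eq_of_heq hts) ⟨i⟩⟩

def map (f : A → B) : CTree K I A → CTree K I B :=
  M.corec fun t =>
    match M.dest t with
    | ⟨Sum.inl a, _⟩ => ⟨Sum.inl (f a), fun e => e.elim⟩
    | ⟨Sum.inr k, ts⟩ => ⟨Sum.inr ⟨k.down⟩, fun i => ts ⟨i.down⟩⟩

@[simp] theorem map_leaf (f : A → B) (a : A) : (leaf a : CTree K I A).map f = leaf (f a) := by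
  apply dest_injective
  rw [map, M.dest_corec]
  simp only [dest_leaf]
  erw [PFunctor.map_eq]
  congr
  funext e
  exact e.elim

@[simp] theorem map_node (f : A → B) (k : K) (ts : I k → CTree K I A) :
    (node k ts).map f = node k fun i => (ts i).map f := by
  apply dest_injective
  rw [map, M.dest_corec]
  simp only [dest_node]
  erw [PFunctor.map_eq]
  rfl

/-- The corecursion step of `mu`; the state `inr t` copies the tree `t` reached at a leaf. -/
def muStep (s : CTree K I (CTree K I A) ⊕ CTree K I A) :
    CTreeP K I A (CTree K I (CTree K I A) ⊕ CTree K I A) :=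
  match s with
  | Sum.inl d =>
      match M.dest d with
      | ⟨Sum.inl t, _⟩ =>
          (match M.dest t with
          | ⟨Sum.inl a, _⟩ => ⟨Sum.inl a, fun e => e.elim⟩
          | ⟨Sum.inr k, ts⟩ => ⟨Sum.inr k, fun i => Sum.inr (ts i)⟩)
      | ⟨Sum.inr k, ds⟩ => ⟨Sum.inr k, fun i => Sum.inl (ds i)⟩
  | Sum.inr t =>
      match M.dest t with
      | ⟨Sum.inl a, _⟩ => ⟨Sum.inl a, fun e => e.elim⟩
      | ⟨Sum.inr k, ts⟩ => ⟨Sum.inr k, fun i => Sum.inr (ts i)⟩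

theorem mu_eq_corec (d : CTree K I (CTree K I A)) : mu d = M.corec muStep (Sum.inl d) := rfl

theorem corec_muStep_inr (t : CTree K I A) : M.corec muStep (Sum.inr t) = t := by
  refine M.bisim (fun x y => x = M.corec muStep (Sum.inr y)) ?_ _ _ rfl
  rintro _ y rfl
  rcases leaf_or_node y with ⟨a, rfl⟩ | ⟨k, ts, rfl⟩
  · refine ⟨Sum.inl a, fun e => PEmpty.elim e, fun e => PEmpty.elim e, ?_, dest_leaf a,
      fun e => PEmpty.elim e⟩
    rw [M.dest_corec]
    simp only [muStep, dest_leaf]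
    erw [PFunctor.map_eq]
    congr 1
    funext e
    exact e.elim
  · refine ⟨Sum.inr ⟨k⟩, _, _, ?_, dest_node k ts, fun _ => rfl⟩
    rw [M.dest_corec]
    simp only [muStep, dest_node]
    erw [PFunctor.map_eq]
    rfl

@[simp] theorem mu_leaf (t : CTree K I A) : mu (leaf t) = t := by
  conv_rhs => rw [← corec_muStep_inr t]
  apply dest_injective
  rw [mu_eq_corec, M.dest_corec, M.dest_corec]
  simp only [muStep, dest_leaf]

@[simp] theorem mu_node (k : K) (ds : I k → CTree K I (CTree K I A)) :
    mu (node k ds) = node k fun i => mu (ds i) := by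
  apply dest_injective
  rw [mu_eq_corec, M.dest_corec]
  simp only [muStep, dest_node]
  erw [PFunctor.map_eq]
  rfl

theorem mu_map (f : A → B) (d : CTree K I (CTree K I A)) : (d.map (map f)).mu = d.mu.map f := by
  refine M.bisim (fun x y => x = y ∨ ∃ d, x = (d.map (map f)).mu ∧ y = d.mu.map f) ?_ _ _
    (Or.inr ⟨d, rfl, rfl⟩)
  rintro x y (rfl | ⟨d, rfl, rfl⟩)
  · exact ⟨_, _, _, rfl, rfl, fun _ => Or.inl rfl⟩
  rcases leaf_or_node d with ⟨t, rfl⟩ | ⟨k, ds, rfl⟩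
  · simp only [map_leaf, mu_leaf]
    exact ⟨_, _, _, rfl, rfl, fun _ => Or.inl rfl⟩
  · simp only [map_node, mu_node]
    exact ⟨Sum.inr ⟨k⟩, _, _, dest_node _ _, dest_node _ _,
      fun i => Or.inr ⟨ds i.down, rfl, rfl⟩⟩

end CTree

universe w'

section TestLemmas

variable {A : Type u}

theorem liftTest_nonempty_congr {P : A → Type w} {Q : A → Type w'}
    (h : ∀ a, Nonempty (P a) ↔ Nonempty (Q a)) (s : Test A) :
    Nonempty (liftTest P s) ↔ Nonempty (liftTest Q s) := by
  induction s with
  | atom a => exact h a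
  | tru => exact iff_of_true ⟨⟨⟩⟩ ⟨⟨⟩⟩
  | fls => exact iff_of_false (fun ⟨e⟩ => e.elim) (fun ⟨e⟩ => e.elim)
  | and _ _ ih₁ ih₂ => simp only [liftTest, nonempty_prod, ih₁, ih₂]
  | or _ _ ih₁ ih₂ => simp only [liftTest, nonempty_sum, ih₁, ih₂]
  | all _ ih => simp only [liftTest, Classical.nonempty_pi, ih]
  | ex _ ih => simp only [liftTest, nonempty_sigma, ih]

theorem liftTest_mapTest {B : Type v} (g : A → B) (Q : B → Type w) (s : Test A) :
    liftTest Q (mapTest g s) = liftTest (fun a => Q (g a)) s := by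
  induction s with
  | atom | tru | fls => rfl
  | and _ _ ih₁ ih₂ | or _ _ ih₁ ih₂ => simp only [mapTest, liftTest, ih₁, ih₂]
  | all _ ih => exact congrArg (fun F => (n : ℕ) → F n) (funext ih)
  | ex _ ih => exact congrArg (fun F => (n : ℕ) × F n) (funext ih)

end TestLemmas

section Transport

variable {K : Type} {I : K → Type} {O : Type} {πl : O → Bool}
  {πn : (k : K) → O → Test (I k × O)} {A : Type u} {B : Type v} (f : A → B)
  {P : A → Type w} {Q : B → Type w'}

mutual

theorem Alpha.nonempty_map (hPQ : ∀ a, P a → Nonempty (Q (f a))) :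
    ∀ {o : O} {t : CTree K I A}, Alpha πl πn P o t → Nonempty (Alpha πl πn Q o (t.map f))
  | _, _, .leaf hb p => by
    rw [CTree.map_leaf]
    exact (hPQ _ p).map (.leaf hb)
  | _, _, .node ps => by
    rw [CTree.map_node]
    exact (AlphaT.nonempty_map hPQ ps).map .node

theorem AlphaT.nonempty_map (hPQ : ∀ a, P a → Nonempty (Q (f a))) :
    ∀ {k : K} {s : Test (I k × O)} {ts : I k → CTree K I A},
      AlphaT πl πn P s ts → Nonempty (AlphaT πl πn Q s fun i => (ts i).map f)
  | _, _, _, .atom p => (Alpha.nonempty_map hPQ p).map .atom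
  | _, _, _, .tru => ⟨.tru⟩
  | _, _, _, .and p₁ p₂ =>
    (AlphaT.nonempty_map hPQ p₁).elim fun q₁ => (AlphaT.nonempty_map hPQ p₂).map (.and q₁)
  | _, _, _, .orl p => (AlphaT.nonempty_map hPQ p).map .orl
  | _, _, _, .orr p => (AlphaT.nonempty_map hPQ p).map .orr
  | _, _, _, .all ps => ⟨.all fun n => Classical.choice (AlphaT.nonempty_map hPQ (ps n))⟩
  | _, _, _, .ex n p => (AlphaT.nonempty_map hPQ p).map (.ex n)

end

mutual

theorem Alpha.nonempty_of_map (hQP : ∀ a, Q (f a) → Nonempty (P a)) :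
    ∀ {o : O} {s : CTree K I B} {t : CTree K I A},
      s = t.map f → Alpha πl πn Q o s → Nonempty (Alpha πl πn P o t)
  | _, _, t, ht, .leaf hb q => by
    rcases CTree.leaf_or_node t with ⟨a, rfl⟩ | ⟨k, ts, rfl⟩
    · rw [CTree.map_leaf] at ht
      obtain rfl := CTree.leaf_injective ht
      exact (hQP a q).map (.leaf hb)
    · rw [CTree.map_node] at ht
      exact (CTree.leaf_ne_node ht).elim
  | _, _, t, ht, .node qs => by
    rcases CTree.leaf_or_node t with ⟨a, rfl⟩ | ⟨k, ts, rfl⟩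
    · rw [CTree.map_leaf] at ht
      exact (CTree.leaf_ne_node ht.symm).elim
    · rw [CTree.map_node] at ht
      obtain ⟨rfl, hts⟩ := CTree.node_inj ht
      exact (AlphaT.nonempty_of_map hQP hts qs).map .node

theorem AlphaT.nonempty_of_map (hQP : ∀ a, Q (f a) → Nonempty (P a)) :
    ∀ {k : K} {s : Test (I k × O)} {Qs : I k → CTree K I B} {ts : I k → CTree K I A},
      (∀ i, Qs i = (ts i).map f) → AlphaT πl πn Q s Qs → Nonempty (AlphaT πl πn P s ts)
  | _, _, _, _, hts, .atom (x := x) q => (Alpha.nonempty_of_map hQP (hts x) q).map .atom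
  | _, _, _, _, _, .tru => ⟨.tru⟩
  | _, _, _, _, hts, .and q₁ q₂ =>
    (AlphaT.nonempty_of_map hQP hts q₁).elim fun p₁ =>
      (AlphaT.nonempty_of_map hQP hts q₂).map (.and p₁)
  | _, _, _, _, hts, .orl q => (AlphaT.nonempty_of_map hQP hts q).map .orl
  | _, _, _, _, hts, .orr q => (AlphaT.nonempty_of_map hQP hts q).map .orr
  | _, _, _, _, hts, .all qs =>
    ⟨.all fun n => Classical.choice (AlphaT.nonempty_of_map hQP hts (qs n))⟩
  | _, _, _, _, hts, .ex n q => (AlphaT.nonempty_of_map hQP hts q).map (.ex n)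

end

theorem nonempty_alpha_map_iff (hPQ : ∀ a, Nonempty (P a) ↔ Nonempty (Q (f a))) {o : O}
    {t : CTree K I A} :
    Nonempty (Alpha πl πn Q o (t.map f)) ↔ Nonempty (Alpha πl πn P o t) :=
  ⟨fun ⟨q⟩ => Alpha.nonempty_of_map f (fun a q => (hPQ a).2 ⟨q⟩) rfl q,
    fun ⟨p⟩ => Alpha.nonempty_map f (fun a p => (hPQ a).1 ⟨p⟩) p⟩

end Transport

section Satisfaction

variable {K : Type} {I : K → Type} {O : Type} (πl : O → Bool)
  (πn : (k : K) → O → Test (I k × O))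

theorem satTest_toFTest {b : Srt} {σ : Ty} (P : Tm K I b σ) (s : Test (Form K I O b σ)) :
    SatTest πl πn (toFTest s) P = liftTest (fun ψ => Sat πl πn ψ P) s := by
  induction s with
  | atom | tru | fls => rfl
  | and _ _ ih₁ ih₂ | or _ _ ih₁ ih₂ => simp only [toFTest, SatTest, liftTest, ih₁, ih₂]
  | all _ ih => exact congrArg (fun F => (n : ℕ) → F n) (funext ih)
  | ex _ ih => exact congrArg (fun F => (n : ℕ) × F n) (funext ih)

theorem sat_decompFormA (πd : O → Test (O × O)) (o : O) {τ : Ty} (φ : Form K I O .val τ)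
    (M : Tm K I .cpt (.u τ)) :
    Sat πl πn (decompFormA πd o φ) M =
      liftTest (fun p => liftTree πl πn p.1 (liftTree πl πn p.2 (Sat πl πn φ)) M)
        (πd o) := by
  rw [decompFormA, Form.mkTest, Sat, satTest_toFTest, liftTest_mapTest]
  rfl

end Satisfaction

/-- if `πd` is an `α`-decomposition then `μ M ⊨ obs_α o φ`
iff `M ⊨ (πd o)_α[φ]`. -/
theorem alpha_decomposition_sat
    {K : Type} {I : K → Type} {O : Type}
    (πl : O → Bool) (πn : (k : K) → O → Test (I k × O))
    (πd : O → Test (O × O)) (h : IsAlphaDecomposition πl πn πd)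
    {τ : Ty} (φ : Form K I O .val τ) (M : Tm K I .cpt (.u τ)) (o : O) :
    Nonempty ((Sat πl πn (.obsA o φ) (CTree.mu M) → Sat πl πn (decompFormA πd o φ) M) ×
      (Sat πl πn (decompFormA πd o φ) M → Sat πl πn (.obsA o φ) (CTree.mu M))) := by
  let Sφ : Val K I τ → Type := Sat πl πn φ
  have hleaves : ∀ o' (t : Cpt K I τ),
      Nonempty (algA πl πn o' (t.map Sφ)) ↔ Nonempty (liftTree πl πn o' Sφ t) :=
    fun _ _ => nonempty_alpha_map_iff Sφ fun _ => Iff.rfl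
  let d : CTree K I (CTree K I Type) := CTree.map (CTree.map Sφ) (M : CTree K I (Cpt K I τ))
  have hμ :
      Nonempty (Sat πl πn (.obsA o φ) (CTree.mu M)) ↔ Nonempty (algA πl πn o d.mu) := by
    rw [show d.mu = (CTree.mu M).map Sφ from CTree.mu_map Sφ _]
    exact (hleaves o _).symm
  have hdecomp : Nonempty (algA πl πn o d.mu) ↔
      Nonempty (liftTest (fun p => liftTree πl πn p.1 (algA πl πn p.2) d) (πd o)) :=
    ⟨Nonempty.map (h d o).1, Nonempty.map (h d o).2⟩
  have hM : Nonempty (liftTest (fun p => liftTree πl πn p.1 (algA πl πn p.2) d) (πd o)) ↔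
      Nonempty (Sat πl πn (decompFormA πd o φ) M) := by
    rw [sat_decompFormA]
    exact liftTest_nonempty_congr
      (fun p => nonempty_alpha_map_iff _ fun t => (hleaves p.2 t).symm) _
  have hiff := hμ.trans (hdecomp.trans hM)
  exact ⟨⟨fun hs => Classical.choice (hiff.1 ⟨hs⟩),
    fun hs => Classical.choice (hiff.2 ⟨hs⟩)⟩⟩
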